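/- Let G₉ be the subgroup of G₁₁ generated by s and u. Then {1, z, z²} is a left transversal of G₉ in G₁₁, i.e. G₁₁ = G₉ ∪ z·G₉ ∪ z²·G₉ with the three cosets pairwise disjoint; consequently, with Z₁₁ = {1, z, …, z²³}, U = {1, u, u², u³}, and X₁₁ = {1, s, s·u, s·u·s, s·u², s·u²·s}, the map Z₁₁ × U × X₁₁ → G₁₁ sending (y, v, x) to y·v·x is a bijection. -/

import Mathlib

/-!
Put `c = z³`. The element `z` is central and `t = z (us)⁻¹`, so `t³ = 1` says `c = (us)³`.
Modulo `c`, the generators `s, u` satisfy the relations `s² = u⁴ = (us)³ = 1` of `S₄`, and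
rewriting with them shows that `c⁸ = 1`, hence `z²⁴ = 1`, and that the 576 elements
`zⁱ uʲ x` (`x ∈ X₁₁`) are closed under right multiplication by `s`, `u` and `z`: this is the coset
table of `⟨u⟩` in `S₄`. So they exhaust `G₁₁`. They are pairwise distinct because the `uʲ x` stay
distinct in the quotient `G₁₁ / ⟨z⟩ ≅ S₄`, while `z` has order 24 in a two-dimensional
representation over `𝔽₇₃`. Finally `z³ ∈ G₉`, and the character `G₁₁ → ℤ/3` killing `s` and `u`
separates the cosets `G₉`, `z G₉`, `z² G₉`.
-/

open Pointwise

namespace Octa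

def rels : Set (FreeGroup (Fin 3)) :=
  { FreeGroup.of 0 ^ 2, FreeGroup.of 1 ^ 3, FreeGroup.of 2 ^ 4,
    FreeGroup.of 0 * FreeGroup.of 1 * FreeGroup.of 2 *
      (FreeGroup.of 1 * FreeGroup.of 2 * FreeGroup.of 0)⁻¹,
    FreeGroup.of 0 * FreeGroup.of 1 * FreeGroup.of 2 *
      (FreeGroup.of 2 * FreeGroup.of 0 * FreeGroup.of 1)⁻¹ }

/-- The group `G₁₁ = ⟨s, t, u | s² = t³ = u⁴ = 1, stu = tus = ust⟩`. -/
abbrev G11 := PresentedGroup rels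

def s : G11 := PresentedGroup.of 0
def t : G11 := PresentedGroup.of 1
def u : G11 := PresentedGroup.of 2
def z : G11 := s * t * u

def G9 : Subgroup G11 := Subgroup.closure {s, u}

end Octa

lemma Set.eq_univ_of_mul_mem_of_closure_eq_top {G : Type*} [Group G] {S T : Set G}
    (hS : Subgroup.closure S = ⊤) (hS_fin : ∀ x ∈ S, IsOfFinOrder x) (h1 : 1 ∈ T)
    (hT : ∀ g ∈ T, ∀ x ∈ S, g * x ∈ T) : T = Set.univ := by
  have hM : Submonoid.closure S = ⊤ := by
    rw [← Subgroup.closure_toSubmonoid_of_isOfFinOrder hS_fin, hS, Subgroup.top_toSubmonoid]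
  exact Set.eq_univ_of_forall fun g => Submonoid.induction_of_closure_eq_top_right hM g h1
    fun g x hx hg => hT g hg x hx

lemma Set.bijOn_range_univ_of_bijective_comp {α β ι : Type*} {f : α → β} {e : ι → α}
    (h : Function.Bijective (f ∘ e)) : Set.BijOn f (Set.range e) Set.univ :=
  ⟨Set.mapsTo_univ _ _, h.injective.injOn_range, fun y _ =>
    let ⟨i, hi⟩ := h.surjective y
    ⟨e i, Set.mem_range_self i, hi⟩⟩

lemma Function.Injective.mul_of_map_eq_one {G H ι κ : Type*} [Group G] [Monoid H] (f : G →* H)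
    {a : ι → G} {b : κ → G} (ha : Function.Injective a) (hfa : ∀ i, f (a i) = 1)
    (hb : Function.Injective (f ∘ b)) : Function.Injective fun p : ι × κ => a p.1 * b p.2 := by
  rintro ⟨i, k⟩ ⟨i', k'⟩ h
  have hk : k = k' := hb (by simpa [hfa] using congrArg f h)
  subst hk
  simpa [ha.eq_iff] using h

lemma disjoint_smul_of_le_ker {G M : Type*} [Group G] [Monoid M] (χ : G →* M) {H : Subgroup G}
    (hH : H ≤ χ.ker) {a b : G} (hab : χ a ≠ χ b) :
    Disjoint (a • (H : Set G)) (b • (H : Set G)) := by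
  rw [Set.disjoint_left]
  rintro _ ⟨h, hh, rfl⟩ ⟨h', hh', heq⟩
  have := congrArg χ heq
  simp only [smul_eq_mul, map_mul, MonoidHom.mem_ker.mp (hH hh), MonoidHom.mem_ker.mp (hH hh'),
    mul_one] at this
  exact hab this.symm

def xWord {M : Type*} [Monoid M] (a b : M) : Fin 6 → M :=
  ![1, a, a * b, a * b * a, a * b ^ 2, a * b ^ 2 * a]

lemma map_xWord {M N : Type*} [Monoid M] [Monoid N] (f : M →* N) (a b : M) (k : Fin 6) :
    f (xWord a b k) = xWord (f a) (f b) k := by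
  fin_cases k <;> simp [xWord]

lemma xWord_mem {G : Type*} [Group G] {H : Subgroup G} {a b : G} (ha : a ∈ H) (hb : b ∈ H)
    (k : Fin 6) : xWord a b k ∈ H := by
  fin_cases k
  · exact one_mem H
  · exact ha
  · exact mul_mem ha hb
  · exact mul_mem (mul_mem ha hb) ha
  · exact mul_mem ha (pow_mem hb 2)
  · exact mul_mem (mul_mem ha (pow_mem hb 2)) ha

namespace OctahedralExtension

variable {G : Type*} [Group G] {s u c : G}

lemma mul_pow_three (hc : (u * s) ^ 3 = c) (hcs : Commute c s) : (s * u) ^ 3 = c := by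
  calc (s * u) ^ 3 = s * (u * s) ^ 3 * s⁻¹ := by simp only [pow_succ, pow_zero]; group
    _ = c := by rw [hc, ← hcs.eq]; group

lemma sus_mul_u (hs : s ^ 2 = 1) (hu : u ^ 4 = 1) (hc : (u * s) ^ 3 = c) (hcs : Commute c s) :
    s * u * s * u = c * u ^ 3 * s := by
  calc s * u * s * u = (s * u) ^ 3 * u ^ 3 * s * (s * u ^ 4 * s)⁻¹ := by
        simp only [pow_succ, pow_zero]; group
    _ = c * u ^ 3 * s := by
        rw [mul_pow_three hc hcs, hu, mul_one, ← sq, hs, inv_one, mul_one]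

lemma mul_s_mul_u_cube (hs : s ^ 2 = 1) (hu : u ^ 4 = 1) (hc : (u * s) ^ 3 = c) :
    c * (s * u ^ 3) = u * s * u * s := by
  calc c * (s * u ^ 3) = u * s * u * s * (u * s ^ 2 * u⁻¹) * u ^ 4 := by
        rw [← hc]; simp only [pow_succ, pow_zero]; group
    _ = u * s * u * s := by rw [hs, hu]; group

lemma su_sq_su (hs : s ^ 2 = 1) (hu : u ^ 4 = 1) (hc : (u * s) ^ 3 = c) (hcs : Commute c s)
    (hcu : Commute c u) : s * u ^ 2 * s * u = c ^ 2 * u ^ 3 * (s * u ^ 2 * s) := by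
  have husu : u * s * u = c * (s * u ^ 3 * s) := by
    calc u * s * u = u * s * u * s * s * (s ^ 2)⁻¹ := by simp only [pow_succ, pow_zero]; group
      _ = _ := by rw [← mul_s_mul_u_cube hs hu hc, hs]; group
  have hsus : s * u * s = c * u ^ 3 * s * u ^ 3 := by
    calc s * u * s = s * u * s * u * u ^ 3 * (u ^ 4)⁻¹ := by simp only [pow_succ, pow_zero]; group
      _ = _ := by rw [sus_mul_u hs hu hc hcs, hu]; group
  calc s * u ^ 2 * s * u = s * u * (u * s * u) := by simp only [pow_succ, pow_zero]; group
    _ = c * (s * u * s) * u ^ 3 * s := by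
        rw [husu, ← mul_assoc, ← (hcs.mul_right hcu).eq]; group
    _ = c ^ 2 * u ^ 3 * s * u ^ 4 * (u ^ 2 * s) := by
        rw [hsus]; simp only [pow_succ, pow_zero]; group
    _ = c ^ 2 * u ^ 3 * (s * u ^ 2 * s) := by rw [hu]; group

/-- `(s u²)⁴ = c⁴`, while conjugation by `s` inverts `s u²` and fixes `c`. -/
lemma pow_eight_eq_one (hs : s ^ 2 = 1) (hu : u ^ 4 = 1) (hc : (u * s) ^ 3 = c)
    (hcs : Commute c s) (hcu : Commute c u) : c ^ 8 = 1 := by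
  have ha_inv : (s * u ^ 2)⁻¹ = u ^ 2 * s := by
    refine inv_eq_of_mul_eq_one_right ?_
    calc s * u ^ 2 * (u ^ 2 * s) = s * u ^ 4 * s := by simp only [pow_succ, pow_zero]; group
      _ = 1 := by rw [hu, mul_one, ← sq, hs]
  have hsq : (s * u ^ 2) ^ 2 = c ^ 4 * (u ^ 2 * s) ^ 2 := by
    have key := su_sq_su hs hu hc hcs hcu
    calc (s * u ^ 2) ^ 2 = s * u ^ 2 * s * u * u := by simp only [pow_succ, pow_zero]; group
      _ = c ^ 2 * u ^ 3 * (s * u ^ 2 * s) * u := by rw [key]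
      _ = c ^ 2 * (u ^ 3 * c ^ 2) * u ^ 3 * (s * u ^ 2 * s) := by
          rw [mul_assoc _ (s * u ^ 2 * s), key]; group
      _ = c ^ 4 * u ^ 4 * (u ^ 2 * s) ^ 2 := by
          rw [← (hcu.pow_pow 2 3).eq]; simp only [pow_succ, pow_zero]; group
      _ = c ^ 4 * (u ^ 2 * s) ^ 2 := by rw [hu, mul_one]
  have h4 : (s * u ^ 2) ^ 4 = c ^ 4 := by
    calc (s * u ^ 2) ^ 4 = (s * u ^ 2) ^ 2 * (s * u ^ 2) ^ 2 := by rw [← pow_add]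
      _ = c ^ 4 := by
          nth_rewrite 1 [hsq]; rw [← ha_inv]; simp only [pow_succ, pow_zero]; group
  have hconj : s⁻¹ * (s * u ^ 2) ^ 4 * s = ((s * u ^ 2) ^ 4)⁻¹ := by
    calc s⁻¹ * (s * u ^ 2) ^ 4 * s = (u ^ 2 * s) ^ 4 := by simp only [pow_succ, pow_zero]; group
      _ = ((s * u ^ 2) ^ 4)⁻¹ := by rw [← ha_inv, inv_pow]
  rw [h4, mul_assoc, (hcs.pow_left 4).eq, inv_mul_cancel_left] at hconj
  calc c ^ 8 = c ^ 4 * c ^ 4 := by rw [← pow_add]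
    _ = 1 := by nth_rewrite 2 [hconj]; group

end OctahedralExtension

namespace Octa

open OctahedralExtension

lemma s_sq : s ^ 2 = 1 :=
  (map_pow _ _ _).symm.trans (PresentedGroup.one_of_mem (by simp [rels]))

lemma t_pow_three : t ^ 3 = 1 :=
  (map_pow _ _ _).symm.trans (PresentedGroup.one_of_mem (by simp [rels]))

lemma u_pow_four : u ^ 4 = 1 :=
  (map_pow _ _ _).symm.trans (PresentedGroup.one_of_mem (by simp [rels]))

lemma z_eq_tus : z = t * u * s := by
  have h := PresentedGroup.mk_eq_mk_of_mul_inv_mem (rels := rels)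
    (x := FreeGroup.of 0 * FreeGroup.of 1 * FreeGroup.of 2)
    (y := FreeGroup.of 1 * FreeGroup.of 2 * FreeGroup.of 0) (by simp [rels])
  simp only [map_mul] at h
  exact h

lemma z_eq_ust : z = u * s * t := by
  have h := PresentedGroup.mk_eq_mk_of_mul_inv_mem (rels := rels)
    (x := FreeGroup.of 0 * FreeGroup.of 1 * FreeGroup.of 2)
    (y := FreeGroup.of 2 * FreeGroup.of 0 * FreeGroup.of 1) (by simp [rels])
  simp only [map_mul] at h
  exact h

lemma commute_z (g : G11) : Commute z g := by
  suffices h : Subgroup.closure (Set.range PresentedGroup.of) ≤ Subgroup.centralizer {z} by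
    rw [PresentedGroup.closure_range_of, top_le_iff] at h
    exact (Subgroup.mem_centralizer_singleton_iff.mp (h ▸ Subgroup.mem_top g)).symm
  rw [Subgroup.closure_le]
  rintro _ ⟨i, rfl⟩
  rw [SetLike.mem_coe, Subgroup.mem_centralizer_singleton_iff]
  fin_cases i
  · change s * z = z * s
    nth_rewrite 1 [z_eq_tus]
    rw [z]; group
  · change t * z = z * t
    nth_rewrite 1 [z_eq_ust]
    rw [z_eq_tus]; group
  · change u * z = z * u
    nth_rewrite 2 [z_eq_ust]
    rw [z]; group

lemma z_pow_three : z ^ 3 = (u * s) ^ 3 := by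
  have ht : t = z * (u * s)⁻¹ := by
    calc t = s⁻¹ * z * u⁻¹ := by rw [z]; group
      _ = z * (u * s)⁻¹ := by rw [← (commute_z s⁻¹).eq]; group
  have h := t_pow_three
  rwa [ht, (commute_z _).mul_pow, inv_pow, mul_inv_eq_one] at h

lemma z_pow_24 : z ^ 24 = 1 := by
  rw [show 24 = 3 * 8 by rfl, pow_mul]
  exact pow_eight_eq_one s_sq u_pow_four z_pow_three.symm
    ((commute_z s).pow_left 3) ((commute_z u).pow_left 3)

lemma exists_xWord_mul_s (k : Fin 6) : ∃ k', xWord s u k * s = xWord s u k' := by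
  fin_cases k
  · exact ⟨1, one_mul s⟩
  · exact ⟨0, by simp [xWord, ← sq, s_sq]⟩
  · exact ⟨3, rfl⟩
  · exact ⟨2, by simp [xWord, mul_assoc, ← sq, s_sq]⟩
  · exact ⟨5, rfl⟩
  · exact ⟨4, by simp [xWord, mul_assoc, ← sq, s_sq]⟩

lemma exists_xWord_mul_u (k : Fin 6) :
    ∃ (e m : ℕ) (k' : Fin 6), xWord s u k * u = z ^ e * u ^ m * xWord s u k' := by
  have hc : (u * s) ^ 3 = z ^ 3 := z_pow_three.symm
  have hcs := (commute_z s).pow_left 3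
  have hcu := (commute_z u).pow_left 3
  fin_cases k
  · exact ⟨0, 1, 0, by simp [xWord]⟩
  · exact ⟨0, 0, 2, by simp [xWord]⟩
  · exact ⟨0, 0, 4, by simp [xWord, sq, mul_assoc]⟩
  · exact ⟨3, 3, 1, sus_mul_u s_sq u_pow_four hc hcs⟩
  · refine ⟨21, 1, 3, ?_⟩
    calc s * u ^ 2 * u = z ^ 21 * (z ^ 3 * (s * u ^ 3)) := by
          rw [← mul_assoc, ← pow_add, z_pow_24, one_mul, mul_assoc, ← pow_succ]
      _ = z ^ 21 * (u * s * u * s) := by rw [mul_s_mul_u_cube s_sq u_pow_four hc]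
      _ = _ := by simp [xWord, mul_assoc]
  · refine ⟨6, 3, 5, ?_⟩
    simpa [xWord, ← pow_mul] using su_sq_su s_sq u_pow_four hc hcs hcu

def normalForm (p : Fin 24 × Fin 4 × Fin 6) : G11 :=
  z ^ (p.1 : ℕ) * u ^ (p.2.1 : ℕ) * xWord s u p.2.2

lemma mem_range_normalForm (i j : ℕ) (k : Fin 6) :
    z ^ i * u ^ j * xWord s u k ∈ Set.range normalForm :=
  ⟨(⟨i % 24, Nat.mod_lt _ (by norm_num)⟩, ⟨j % 4, Nat.mod_lt _ (by norm_num)⟩, k), by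
    simp only [normalForm, ← pow_eq_pow_mod i z_pow_24, ← pow_eq_pow_mod j u_pow_four]⟩

lemma closure_s_u_z : Subgroup.closure {s, u, z} = ⊤ := by
  rw [eq_top_iff, ← PresentedGroup.closure_range_of, Subgroup.closure_le]
  rintro _ ⟨i, rfl⟩
  have hs : s ∈ Subgroup.closure {s, u, z} := Subgroup.subset_closure (by simp)
  have hu : u ∈ Subgroup.closure {s, u, z} := Subgroup.subset_closure (by simp)
  have hz : z ∈ Subgroup.closure {s, u, z} := Subgroup.subset_closure (by simp)
  fin_cases i
  · exact hs
  · change t ∈ _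
    rw [show t = s⁻¹ * z * u⁻¹ by rw [z]; group]
    exact mul_mem (mul_mem (inv_mem hs) hz) (inv_mem hu)
  · exact hu

lemma range_normalForm : Set.range normalForm = Set.univ := by
  refine Set.eq_univ_of_mul_mem_of_closure_eq_top closure_s_u_z ?_
    ⟨(0, 0, 0), by simp [normalForm, xWord]⟩ ?_
  · simp only [Set.mem_insert_iff, Set.mem_singleton_iff, forall_eq_or_imp, forall_eq]
    exact ⟨isOfFinOrder_iff_pow_eq_one.mpr ⟨2, two_pos, s_sq⟩,
      isOfFinOrder_iff_pow_eq_one.mpr ⟨4, four_pos, u_pow_four⟩,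
      isOfFinOrder_iff_pow_eq_one.mpr ⟨24, by norm_num, z_pow_24⟩⟩
  rintro _ ⟨⟨i, j, k⟩, rfl⟩ x hx
  simp only [Set.mem_insert_iff, Set.mem_singleton_iff] at hx
  rcases hx with rfl | rfl | rfl
  · obtain ⟨k', hk'⟩ := exists_xWord_mul_s k
    rw [normalForm, mul_assoc, hk']
    exact mem_range_normalForm _ _ _
  · obtain ⟨e, m, k', hk'⟩ := exists_xWord_mul_u k
    have hzu : u ^ (j : ℕ) * (z ^ e * (u ^ m * xWord s u k')) =
        z ^ e * (u ^ (j : ℕ) * (u ^ m * xWord s u k')) :=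
      ((commute_z _).pow_left e).symm.left_comm _
    rw [normalForm, mul_assoc, hk']
    simpa only [mul_assoc, hzu, pow_add] using mem_range_normalForm (i + e) (j + m) k'
  · rw [normalForm, ← (commute_z _).eq, ← mul_assoc, ← mul_assoc, ← pow_succ']
    exact mem_range_normalForm _ _ _

def permS : Equiv.Perm (Fin 4) := Equiv.swap 0 1
def permT : Equiv.Perm (Fin 4) := Equiv.swap 1 2 * Equiv.swap 2 3

def toPerm : G11 →* Equiv.Perm (Fin 4) :=
  PresentedGroup.toGroup (f := ![permS, permT, (permS * permT)⁻¹]) (by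
    intro r hr
    simp only [rels, Set.mem_insert_iff, Set.mem_singleton_iff] at hr
    rcases hr with rfl | rfl | rfl | rfl | rfl <;>
      simp only [map_mul, map_pow, map_inv, FreeGroup.lift_apply_of] <;> decide)

lemma toPerm_z : toPerm z = 1 := by
  simp only [z, s, t, u, map_mul, toPerm, PresentedGroup.toGroup.of]
  simp

lemma injective_toPerm_comp_upow_mul_xWord :
    Function.Injective (toPerm ∘ fun p : Fin 4 × Fin 6 => u ^ (p.1 : ℕ) * xWord s u p.2) := by
  have : toPerm ∘ (fun p : Fin 4 × Fin 6 => u ^ (p.1 : ℕ) * xWord s u p.2) =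
      fun p => (permS * permT)⁻¹ ^ (p.1 : ℕ) * xWord permS (permS * permT)⁻¹ p.2 := by
    funext p
    simp [map_xWord, toPerm, s, u, PresentedGroup.toGroup.of]
  rw [this]
  decide

section Reflection

open Matrix

/- The reflection representation of `G₁₁`, realised over `𝔽₇₃` since `24 ∣ 73 - 1`;
`z` acts as the scalar `52`, a primitive 24th root of unity. -/
def matS : GL (Fin 2) (ZMod 73) := Units.ofPowEqOne !![1, 0; 0, 72] 2 (by decide) two_ne_zero
def matT : GL (Fin 2) (ZMod 73) := Units.ofPowEqOne !![22, 30; 34, 60] 3 (by decide) three_ne_zero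
def matU : GL (Fin 2) (ZMod 73) := Units.ofPowEqOne !![25, 49; 71, 3] 4 (by decide) four_ne_zero

def toGL : G11 →* GL (Fin 2) (ZMod 73) :=
  PresentedGroup.toGroup (f := ![matS, matT, matU]) (by
    intro r hr
    simp only [rels, Set.mem_insert_iff, Set.mem_singleton_iff] at hr
    rcases hr with rfl | rfl | rfl | rfl | rfl <;>
      simp only [map_mul, map_pow, map_inv, FreeGroup.lift_apply_of] <;> ext1 <;> decide)

lemma orderOf_z : orderOf z = 24 := by
  have hz : (toGL z : Matrix (Fin 2) (Fin 2) (ZMod 73)) = !![52, 0; 0, 52] := by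
    rw [show toGL z = matS * matT * matU by
      simp only [z, s, t, u, map_mul, toGL, PresentedGroup.toGroup.of]; rfl]
    decide
  have hpow : ∀ m < 24, 0 < m → (!![52, 0; 0, 52] : Matrix (Fin 2) (Fin 2) (ZMod 73)) ^ m ≠ 1 := by
    decide
  rw [orderOf_eq_iff (by norm_num)]
  refine ⟨z_pow_24, fun m hm hm0 h => hpow m hm hm0 ?_⟩
  rw [← hz, ← Units.val_pow_eq_pow_val, ← map_pow, h, map_one, Units.val_one]

end Reflection

lemma bijective_normalForm : Function.Bijective normalForm := by
  refine ⟨?_, Set.range_eq_univ.mp range_normalForm⟩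
  have hz : Function.Injective fun i : Fin 24 => z ^ (i : ℕ) := fun i j h =>
    Fin.ext (pow_injOn_Iio_orderOf (by simp [orderOf_z]) (by simp [orderOf_z]) h)
  have := hz.mul_of_map_eq_one toPerm (fun i => by simp [toPerm_z])
    injective_toPerm_comp_upow_mul_xWord
  intro p q h
  exact this (by simpa only [normalForm, mul_assoc] using h)

def toZMod3 : G11 →* Multiplicative (ZMod 3) :=
  PresentedGroup.toGroup (f := ![1, Multiplicative.ofAdd 1, 1]) (by
    intro r hr
    simp only [rels, Set.mem_insert_iff, Set.mem_singleton_iff] at hr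
    rcases hr with rfl | rfl | rfl | rfl | rfl <;>
      simp only [map_mul, map_pow, map_inv, FreeGroup.lift_apply_of] <;> decide)

lemma toZMod3_z : toZMod3 z = Multiplicative.ofAdd 1 := by
  simp [z, s, t, u, toZMod3, PresentedGroup.toGroup.of]

lemma G9_le_ker_toZMod3 : G9 ≤ toZMod3.ker := by
  rw [G9, Subgroup.closure_le]
  rintro _ (rfl | rfl) <;> simp [MonoidHom.mem_ker, toZMod3, s, u, PresentedGroup.toGroup.of]

lemma exists_mem_zpow_smul_G9 (g : G11) : ∃ r < 3, g ∈ z ^ r • (G9 : Set G11) := by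
  have hs : s ∈ G9 := Subgroup.subset_closure (by simp)
  have hu : u ∈ G9 := Subgroup.subset_closure (by simp)
  have hz3 : z ^ 3 ∈ G9 := z_pow_three ▸ pow_mem (mul_mem hu hs) 3
  obtain ⟨⟨i, j, k⟩, rfl⟩ := bijective_normalForm.2 g
  refine ⟨(i : ℕ) % 3, Nat.mod_lt _ (by norm_num), (z ^ 3) ^ ((i : ℕ) / 3) * u ^ (j : ℕ) * xWord s u k,
    mul_mem (mul_mem (pow_mem hz3 _) (pow_mem hu _)) (xWord_mem hs hu k), ?_⟩
  dsimp only
  rw [smul_eq_mul, ← pow_mul, ← mul_assoc, ← mul_assoc, ← pow_add, Nat.mod_add_div]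
  rfl

theorem statement11 :
    ((G9 : Set G11) ∪ z • (G9 : Set G11) ∪ z ^ 2 • (G9 : Set G11) = Set.univ) ∧
    Disjoint (G9 : Set G11) (z • (G9 : Set G11)) ∧
    Disjoint (G9 : Set G11) (z ^ 2 • (G9 : Set G11)) ∧
    Disjoint (z • (G9 : Set G11)) (z ^ 2 • (G9 : Set G11)) ∧
    Set.BijOn (fun p : G11 × G11 × G11 => p.1 * p.2.1 * p.2.2)
      (({1, z, z ^ 2, z ^ 3, z ^ 4, z ^ 5, z ^ 6, z ^ 7, z ^ 8, z ^ 9, z ^ 10, z ^ 11, z ^ 12, z ^ 13, z ^ 14, z ^ 15, z ^ 16, z ^ 17, z ^ 18, z ^ 19, z ^ 20, z ^ 21, z ^ 22, z ^ 23} : Set G11) ×ˢ (({1, u, u ^ 2, u ^ 3} : Set G11) ×ˢ ({1, s, s * u, s * u * s, s * u ^ 2, s * u ^ 2 * s} : Set G11)))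
      (Set.univ : Set G11) := by
  have hdisj {a b : G11} (hab : toZMod3 a ≠ toZMod3 b) :=
    disjoint_smul_of_le_ker toZMod3 G9_le_ker_toZMod3 hab
  refine ⟨?_, by simpa using hdisj (a := 1) (b := z) (by rw [map_one, toZMod3_z]; decide),
    by simpa using hdisj (a := 1) (b := z ^ 2) (by rw [map_one, map_pow, toZMod3_z]; decide),
    hdisj (by rw [map_pow, toZMod3_z]; decide), ?_⟩
  · refine Set.eq_univ_of_forall fun g => ?_
    obtain ⟨r, hr, hg⟩ := exists_mem_zpow_smul_G9 g
    interval_cases r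
    · exact Or.inl (Or.inl (by simpa using hg))
    · exact Or.inl (Or.inr (by simpa using hg))
    · exact Or.inr hg
  have hZ : ({1, z, z ^ 2, z ^ 3, z ^ 4, z ^ 5, z ^ 6, z ^ 7, z ^ 8, z ^ 9, z ^ 10, z ^ 11, z ^ 12,
      z ^ 13, z ^ 14, z ^ 15, z ^ 16, z ^ 17, z ^ 18, z ^ 19, z ^ 20, z ^ 21, z ^ 22, z ^ 23} :
      Set G11) = Set.range fun i : Fin 24 => z ^ (i : ℕ) := by
    ext g; simp [Fin.exists_fin_succ, eq_comm]
  have hU : ({1, u, u ^ 2, u ^ 3} : Set G11) = Set.range fun j : Fin 4 => u ^ (j : ℕ) := by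
    ext g; simp [Fin.exists_fin_succ, eq_comm]
  have hX : ({1, s, s * u, s * u * s, s * u ^ 2, s * u ^ 2 * s} : Set G11) =
      Set.range (xWord s u) := by
    simp only [xWord, Matrix.range_cons, Matrix.range_empty, Set.union_empty, Set.singleton_union]
  rw [hZ, hU, hX, Set.prod_range_range_eq, Set.prod_range_range_eq]
  exact Set.bijOn_range_univ_of_bijective_comp bijective_normalForm

end Octa
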